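/- Let h be a differentiable map from ℝ^m to the D×D complex matrices. Then the differential of x ↦ e^{h(x)} satisfies d e^{h(x)} = ∫₀¹ e^{u h(x)} (d h(x)) e^{(1-u) h(x)} du. -/

import Mathlib

/-!
Differentiating `u ↦ e^{uX} e^{(1-u)A}` and integrating over `[0, 1]` gives Duhamel's formula
`e^X - e^A = ∫₀¹ e^{uX} (X - A) e^{(1-u)A} du`. Taking `X = A + tB`, the difference quotient of
`t ↦ e^{A + tB}` at `0` is an integral depending continuously on `t`, whose value at `t = 0` is the
claimed directional derivative.

With the entrywise sup norm, matrices do not form a normed ring, so the Banach-algebra statement is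
transported along the algebra isomorphism `Matrix.toEuclideanCLM`, with which `exp` commutes.
-/

open Matrix MeasureTheory

attribute [local instance] Matrix.normedAddCommGroup Matrix.normedSpace

open NormedSpace

theorem ContinuousLinearEquiv.intervalIntegral_comp_comm {𝕜 E F : Type*} [RCLike 𝕜]
    [NormedAddCommGroup E] [NormedSpace ℝ E] [NormedSpace 𝕜 E]
    [NormedAddCommGroup F] [NormedSpace ℝ F] [NormedSpace 𝕜 F]
    (L : E ≃L[𝕜] F) (f : ℝ → E) (a b : ℝ) (μ : Measure ℝ) :
    ∫ x in a..b, L (f x) ∂μ = L (∫ x in a..b, f x ∂μ) := by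
  simp only [intervalIntegral, L.integral_comp_comm, map_sub]

theorem hasDerivAt_of_sub_eq_smul {E : Type*} [NormedAddCommGroup E] [NormedSpace ℝ E]
    {f G : ℝ → E} {a : ℝ} (hG : ContinuousAt G a) (hfG : ∀ t, f t - f a = (t - a) • G t) :
    HasDerivAt f (G a) a := by
  rw [hasDerivAt_iff_tendsto_slope]
  refine (hG.tendsto.mono_left nhdsWithin_le_nhds).congr' ?_
  filter_upwards [self_mem_nhdsWithin] with t (ht : t ≠ a)
  rw [slope_def_module, hfG, smul_smul, inv_mul_cancel₀ (sub_ne_zero.2 ht), one_smul]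

section BanachAlgebra

variable {𝔸 : Type*} [NormedRing 𝔸] [NormedAlgebra ℝ 𝔸] [CompleteSpace 𝔸]

theorem differentiable_exp_of_real : Differentiable ℝ (exp : 𝔸 → 𝔸) :=
  fun A => (exp_analytic (𝕂 := ℝ) A).differentiableAt

theorem map_exp_of_continuous {𝔹 F : Type*} [Ring 𝔹] [Algebra ℝ 𝔹] [TopologicalSpace 𝔹]
    [IsTopologicalRing 𝔹] [T2Space 𝔹] [FunLike F 𝔸 𝔹] [RingHomClass F 𝔸 𝔹]
    (f : F) (hf : Continuous f) (x : 𝔸) : f (exp x) = exp (f x) := by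
  rw [exp_eq_tsum ℝ, exp_eq_tsum ℝ]
  refine ((expSeries_summable' (𝕂 := ℝ) x).hasSum.map f hf).tsum_eq.symm.trans ?_
  simp only [Function.comp_def, map_inv_natCast_smul f ℝ ℝ, map_pow]

theorem hasDerivAt_exp_smul_mul_exp_smul (X A : 𝔸) (u : ℝ) :
    HasDerivAt (fun u : ℝ => exp (u • X) * exp ((1 - u) • A))
      (exp (u • X) * (X - A) * exp ((1 - u) • A)) u := by
  have hX : HasDerivAt (fun u : ℝ => exp (u • X)) (exp (u • X) * X) u :=
    hasDerivAt_exp_smul_const (𝕂 := ℝ) X u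
  have hA : HasDerivAt (fun u : ℝ => exp ((1 - u) • A)) (-(A * exp ((1 - u) • A))) u := by
    simpa [Function.comp_def] using
      (hasDerivAt_exp_smul_const' (𝕂 := ℝ) A (1 - u)).scomp u ((hasDerivAt_id u).const_sub 1)
  convert hX.fun_mul hA using 1
  noncomm_ring

theorem exp_sub_exp_eq_integral (X A : 𝔸) :
    exp X - exp A = ∫ u in (0 : ℝ)..1, exp (u • X) * (X - A) * exp ((1 - u) • A) := by
  have hexp : Continuous (exp : 𝔸 → 𝔸) := differentiable_exp_of_real.continuous
  rw [intervalIntegral.integral_eq_sub_of_hasDerivAt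
    (fun u _ => hasDerivAt_exp_smul_mul_exp_smul X A u)
    ((by fun_prop : Continuous _).intervalIntegrable 0 1)]
  simp

theorem hasDerivAt_exp_add_smul (A B : 𝔸) :
    HasDerivAt (fun t : ℝ => exp (A + t • B))
      (∫ u in (0 : ℝ)..1, exp (u • A) * B * exp ((1 - u) • A)) 0 := by
  have hexp : Continuous (exp : 𝔸 → 𝔸) := differentiable_exp_of_real.continuous
  set G : ℝ → 𝔸 := fun t => ∫ u in (0 : ℝ)..1, exp (u • (A + t • B)) * B * exp ((1 - u) • A)
  have hG : Continuous G :=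
    intervalIntegral.continuous_parametric_intervalIntegral_of_continuous' (by fun_prop) 0 1
  have hdiff : ∀ t : ℝ, exp (A + t • B) - exp (A + (0 : ℝ) • B) = (t - 0) • G t := fun t => by
    rw [zero_smul, add_zero, exp_sub_exp_eq_integral, add_sub_cancel_left, sub_zero,
      ← intervalIntegral.integral_smul]
    simp only [mul_smul_comm, smul_mul_assoc]
  simpa [G] using hasDerivAt_of_sub_eq_smul hG.continuousAt hdiff

theorem fderiv_exp_apply_eq_integral (A B : 𝔸) :
    fderiv ℝ exp A B = ∫ u in (0 : ℝ)..1, exp (u • A) * B * exp ((1 - u) • A) := by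
  have hline : HasDerivAt (fun t : ℝ => A + t • B) B 0 := by
    simpa using ((hasDerivAt_id (0 : ℝ)).smul_const B).const_add A
  have h := (differentiable_exp_of_real A).hasFDerivAt.comp_hasDerivAt_of_eq 0 hline (by simp)
  exact h.unique (hasDerivAt_exp_add_smul A B)

end BanachAlgebra

/- On matrices, `instTopologicalSpaceMatrix` and the topology of the sup norm agree only after
unfolding, so normed-space lemmas are applied below by unification (`exact`) rather than by `rw`. -/

namespace Matrix

variable {n : Type*} [Fintype n] [DecidableEq n]

noncomputable def toEuclideanCLMReal :
    Matrix n n ℂ ≃L[ℝ] (EuclideanSpace ℂ n →L[ℂ] EuclideanSpace ℂ n) :=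
  ((toEuclideanCLM (n := n) (𝕜 := ℂ)).toAlgEquiv.restrictScalars ℝ).toLinearEquiv
    |>.toContinuousLinearEquiv

@[simp]
theorem toEuclideanCLMReal_apply (M : Matrix n n ℂ) :
    toEuclideanCLMReal M = toEuclideanCLM (n := n) (𝕜 := ℂ) M := rfl

@[simp]
theorem toEuclideanCLMReal_symm_apply (T : EuclideanSpace ℂ n →L[ℂ] EuclideanSpace ℂ n) :
    toEuclideanCLMReal.symm T = (toEuclideanCLM (n := n) (𝕜 := ℂ)).symm T := rfl

theorem exp_eq_toEuclideanCLMReal_symm_exp :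
    (exp : Matrix n n ℂ → Matrix n n ℂ) =
      toEuclideanCLMReal.symm ∘ exp ∘ toEuclideanCLMReal := by
  funext M
  simp only [Function.comp_apply, toEuclideanCLMReal_apply, toEuclideanCLMReal_symm_apply]
  rw [map_exp_of_continuous _ toEuclideanCLMReal.symm.continuous, StarAlgEquiv.symm_apply_apply]

theorem differentiable_exp : Differentiable ℝ (exp : Matrix n n ℂ → Matrix n n ℂ) := by
  rw [exp_eq_toEuclideanCLMReal_symm_exp]
  exact (toEuclideanCLMReal (n := n)).symm.differentiable.comp
    (differentiable_exp_of_real.comp (toEuclideanCLMReal (n := n)).differentiable)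

theorem fderiv_exp_apply_eq_integral (A B : Matrix n n ℂ) :
    fderiv ℝ exp A B = ∫ u in (0 : ℝ)..1, exp (u • A) * B * exp ((1 - u) • A) := by
  set e := toEuclideanCLMReal (n := n)
  have h : HasFDerivAt (e.symm ∘ exp ∘ e)
      ((e.symm : _ →L[ℝ] Matrix n n ℂ).comp ((fderiv ℝ exp (e A)).comp (e : _ →L[ℝ] _))) A :=
    e.symm.hasFDerivAt.comp A ((differentiable_exp_of_real _).hasFDerivAt.comp A e.hasFDerivAt)
  rw [← exp_eq_toEuclideanCLMReal_symm_exp] at h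
  rw [h.fderiv]
  simp only [ContinuousLinearMap.comp_apply, ContinuousLinearEquiv.coe_coe,
    _root_.fderiv_exp_apply_eq_integral]
  have hmap : ∀ u : ℝ, e.symm (exp (u • e A) * e B * exp ((1 - u) • e A)) =
      exp (u • A) * B * exp ((1 - u) • A) := fun u => by
    simp only [exp_eq_toEuclideanCLMReal_symm_exp, Function.comp_apply, map_smul]
    simp [e]
  exact (e.symm.intervalIntegral_comp_comm _ 0 1 volume).symm.trans
    (intervalIntegral.integral_congr fun u _ => hmap u)

end Matrix

/-- Differential of the matrix exponential along a differentiable matrix-valued map `h`: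
`d e^{h(x)} = ∫₀¹ e^{u h(x)} (dh(x)) e^{(1-u) h(x)} du`. -/
theorem fderiv_matrix_exp_integral {m D : ℕ}
    (h : (Fin m → ℝ) → Matrix (Fin D) (Fin D) ℂ) (hdiff : Differentiable ℝ h)
    (x v : Fin m → ℝ) :
    fderiv ℝ (fun x => NormedSpace.exp (h x)) x v
      = ∫ u in (0:ℝ)..1,
          NormedSpace.exp (u • h x) * (fderiv ℝ h x v) * NormedSpace.exp ((1 - u) • h x) := by
  have hcomp := (Matrix.differentiable_exp (h x)).hasFDerivAt.comp x (hdiff x).hasFDerivAt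
  exact (congrArg (· v) hcomp.fderiv).trans (Matrix.fderiv_exp_apply_eq_integral _ _)
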